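/- For all x ≥ 0, L(x/(1+x)) + L(1/(1+x)) = L(1) = π²/6, where L is the Rogers dilogarithm. -/

import Mathlib

open MeasureTheory Real

/-- The Euler dilogarithm `Li₂(x) = -∫₀ˣ log(1-y)/y dy`. -/
noncomputable def Li2 (x : ℝ) : ℝ := -∫ y in (0:ℝ)..x, Real.log (1 - y) / y

/-- The Rogers dilogarithm `L(x) = Li₂(x) + (1/2)·log x·log(1-x)`
(agreeing with `L(0) = 0`, `L(1) = Li₂(1) = π²/6` since `Real.log 0 = 0`). -/
noncomputable def RL (x : ℝ) : ℝ := Li2 x + (1/2) * Real.log x * Real.log (1 - x)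

/-!
Since `Li₂' x = -log(1 - x)/x`, the function `Li₂ x + Li₂ (1 - x) + log x · log (1 - x)` has
derivative zero on `(0, 1)`; it is continuous on `[0, 1)` (as `x log x → 0`), so it equals its
value `Li₂ 1` at `0` (Euler's reflection formula). Symmetrising the product of logarithms turns
this into `L x + L (1 - x) = Li₂ 1`. Finally, integrating `-log(1 - y)/y = ∑ yⁿ/(n + 1)` termwise
gives `Li₂ 1 = ∑ 1/(n + 1)² = π²/6`.
-/

open Set Filter Topology

lemma integrableOn_log_one_sub_div : IntegrableOn (fun y => log (1 - y) / y) (Ioo 0 1) := by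
  have hlog : IntegrableOn (fun y => log (1 - y)) (Ioo 0 1) := by
    have := (intervalIntegral.intervalIntegrable_log' (a := 1) (b := 0)).comp_sub_left 1
    norm_num at this
    exact (intervalIntegrable_iff_integrableOn_Ioo_of_le zero_le_one).1 this
  refine Integrable.mono' (g := fun y => 2 - 2 * log (1 - y))
    ((integrableOn_const (by simp)).sub (hlog.const_mul 2))
    (by fun_prop : Measurable fun y => log (1 - y) / y).aestronglyMeasurable
    ((ae_restrict_iff' measurableSet_Ioo).2 (ae_of_all _ fun y ⟨hy0, hy1⟩ => ?_))
  -- `-log (1 - y) ≤ y / (1 - y)`, whence `|log (1 - y) / y| ≤ 2 - 2 log (1 - y)`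
  have hlog_le : -log (1 - y) * (1 - y) ≤ y := by
    have := one_sub_inv_le_log_of_pos (x := 1 - y) (by linarith)
    rw [sub_le_iff_le_add, ← sub_le_iff_le_add', inv_eq_one_div,
      le_div_iff₀ (by linarith)] at this
    linarith
  have hlog_nonpos : log (1 - y) ≤ 0 := log_nonpos (by linarith) (by linarith)
  rw [norm_div, norm_of_nonpos hlog_nonpos, norm_of_nonneg hy0.le, div_le_iff₀ hy0]
  nlinarith

lemma intervalIntegrable_log_one_sub_div {x : ℝ} (hx : x ∈ Icc 0 1) :
    IntervalIntegrable (fun y => log (1 - y) / y) volume 0 x := by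
  rw [intervalIntegrable_iff_integrableOn_Ioo_of_le hx.1]
  exact integrableOn_log_one_sub_div.mono_set (Ioo_subset_Ioo_right hx.2)

lemma continuousOn_Li2 : ContinuousOn Li2 (Icc 0 1) := by
  have := intervalIntegral.continuousOn_primitive_interval' (μ := volume)
    (intervalIntegrable_log_one_sub_div (x := 1) (by norm_num)) left_mem_uIcc
  rw [uIcc_of_le zero_le_one] at this
  exact this.neg

lemma hasDerivAt_Li2 {x : ℝ} (hx : x ∈ Ioo 0 1) : HasDerivAt Li2 (-(log (1 - x) / x)) x := by
  have hcont : ContinuousAt (fun y => log (1 - y) / y) x :=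
    ((continuousAt_const.sub continuousAt_id).log (sub_ne_zero.2 hx.2.ne')).div continuousAt_id
      hx.1.ne'
  have hmeas : Measurable fun y => log (1 - y) / y := by fun_prop
  exact (intervalIntegral.integral_hasDerivAt_right
    (intervalIntegrable_log_one_sub_div (Ioo_subset_Icc_self hx))
    hmeas.aestronglyMeasurable.stronglyMeasurableAtFilter hcont).neg

@[simp]
lemma Li2_zero : Li2 0 = 0 := by simp [Li2]

lemma hasSum_one_div_succ_sq : HasSum (fun n : ℕ => 1 / ((n : ℝ) + 1) ^ 2) (π ^ 2 / 6) := by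
  simpa using (hasSum_nat_add_iff' 1).2 hasSum_zeta_two

lemma hasSum_pow_div_succ {y : ℝ} (hy0 : y ≠ 0) (hy : |y| < 1) :
    HasSum (fun n : ℕ => y ^ n / (n + 1)) (-(log (1 - y) / y)) := by
  have := (hasSum_pow_div_log_of_abs_lt_one hy).div_const y
  rw [← neg_div]
  refine this.congr_fun fun n => ?_
  field_simp [hy0]
  ring

lemma setIntegral_Ioo_pow_div_succ (n : ℕ) :
    ∫ y in Ioo (0 : ℝ) 1, y ^ n / (n + 1) = 1 / ((n : ℝ) + 1) ^ 2 := by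
  rw [← integral_Ioc_eq_integral_Ioo, ← intervalIntegral.integral_of_le zero_le_one,
    intervalIntegral.integral_div, integral_pow]
  field_simp
  simp

lemma Li2_one : Li2 1 = π ^ 2 / 6 := by
  have hF_int (n : ℕ) : IntegrableOn (fun y : ℝ => y ^ n / (n + 1)) (Ioo 0 1) :=
    (continuous_pow n).div_const _ |>.integrableOn_Icc.mono_set Ioo_subset_Icc_self
  have hF_norm (n : ℕ) : ∫ y in Ioo (0 : ℝ) 1, ‖y ^ n / (n + 1)‖ = 1 / ((n : ℝ) + 1) ^ 2 := by
    rw [← setIntegral_Ioo_pow_div_succ]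
    refine setIntegral_congr_fun measurableSet_Ioo fun y hy => norm_of_nonneg ?_
    have := hy.1
    positivity
  have key := hasSum_integral_of_summable_integral_norm hF_int
    (by simpa only [hF_norm] using hasSum_one_div_succ_sq.summable)
  rw [setIntegral_congr_fun measurableSet_Ioo fun y hy => (hasSum_pow_div_succ hy.1.ne'
      (abs_lt.2 ⟨by linarith [hy.1], hy.2⟩)).tsum_eq,
    integral_neg] at key
  simp only [setIntegral_Ioo_pow_div_succ] at key
  rw [hasSum_one_div_succ_sq.unique key, Li2, intervalIntegral.integral_of_le zero_le_one,
    integral_Ioc_eq_integral_Ioo]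

lemma tendsto_log_mul_log_one_sub_nhdsGT_zero :
    Tendsto (fun t => log t * log (1 - t)) (𝓝[>] 0) (𝓝 0) := by
  have h_mul_log : Tendsto (fun t => t * log t) (𝓝[>] 0) (𝓝 0) :=
    (continuous_mul_log.tendsto' 0 0 (by simp)).mono_left nhdsWithin_le_nhds
  have h_slope : Tendsto (fun t => log (1 - t) / t) (𝓝[>] 0) (𝓝 (-1)) := by
    have hderiv : HasDerivAt (fun t => log (1 - t)) (-1) 0 := by
      simpa using ((hasDerivAt_id (0 : ℝ)).const_sub 1).log (by norm_num)
    simpa [div_eq_inv_mul] using hderiv.tendsto_slope_zero_right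
  have := h_mul_log.mul h_slope
  rw [zero_mul] at this
  refine this.congr' ?_
  filter_upwards [self_mem_nhdsWithin] with t (ht : 0 < t)
  field_simp

lemma continuousOn_log_mul_log_one_sub :
    ContinuousOn (fun t => log t * log (1 - t)) (Ico 0 1) := by
  intro t ht
  rcases ht.1.eq_or_lt with rfl | ht0
  · have hsub : Ico (0 : ℝ) 1 \ {0} ⊆ Ioi 0 := fun s hs => lt_of_le_of_ne hs.1.1 (Ne.symm hs.2)
    rw [← continuousWithinAt_sdiff_self, ContinuousWithinAt]
    simpa using tendsto_log_mul_log_one_sub_nhdsGT_zero.mono_left (nhdsWithin_mono _ hsub)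
  · exact ((continuousAt_log ht0.ne').mul ((continuousAt_const.sub continuousAt_id).log
      (sub_ne_zero.2 ht.2.ne'))).continuousWithinAt

lemma hasDerivAt_Li2_add_Li2_one_sub_add_log_mul_log {t : ℝ} (ht : t ∈ Ioo 0 1) :
    HasDerivAt (fun t => Li2 t + Li2 (1 - t) + log t * log (1 - t)) 0 t := by
  have ht' : 1 - t ∈ Ioo 0 1 := ⟨by linarith [ht.2], by linarith [ht.1]⟩
  have h_one_sub : HasDerivAt (fun t : ℝ => 1 - t) (-1) t := by
    simpa using (hasDerivAt_id t).const_sub 1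
  have := ((hasDerivAt_Li2 ht).add ((hasDerivAt_Li2 ht').comp t h_one_sub)).add
    ((hasDerivAt_log ht.1.ne').mul (h_one_sub.log (sub_ne_zero.2 ht.2.ne')))
  refine this.congr_deriv ?_
  rw [sub_sub_cancel]
  field_simp [ht.1.ne', (sub_pos.2 ht.2).ne']
  ring

theorem Li2_add_Li2_one_sub {x : ℝ} (hx : x ∈ Icc 0 1) :
    Li2 x + Li2 (1 - x) + log x * log (1 - x) = π ^ 2 / 6 := by
  set f := fun t => Li2 t + Li2 (1 - t) + log t * log (1 - t)
  have hf_zero : f 0 = π ^ 2 / 6 := by simp [f, Li2_one]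
  rcases hx.2.eq_or_lt with rfl | hx1
  · simp [Li2_one]
  rcases hx.1.eq_or_lt with rfl | hx0
  · exact hf_zero
  have hcont : ContinuousOn f (Icc 0 x) := by
    have hsub : Icc 0 x ⊆ Ico 0 1 := Icc_subset_Ico_right hx1
    refine ((continuousOn_Li2.mono (hsub.trans Ico_subset_Icc_self)).add ?_).add
      (continuousOn_log_mul_log_one_sub.mono hsub)
    refine continuousOn_Li2.comp (by fun_prop) fun t ht => ?_
    exact ⟨by linarith [ht.2], by linarith [ht.1]⟩
  obtain ⟨c, _, hc⟩ := exists_hasDerivAt_eq_slope f (fun _ => 0) hx0 hcont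
    fun t ht => hasDerivAt_Li2_add_Li2_one_sub_add_log_mul_log ⟨ht.1, ht.2.trans hx1⟩
  rw [sub_zero, eq_comm, div_eq_zero_iff, sub_eq_zero] at hc
  exact (hc.resolve_right hx0.ne').trans hf_zero

lemma RL_add_RL_one_sub {x : ℝ} (hx : x ∈ Icc 0 1) : RL x + RL (1 - x) = π ^ 2 / 6 := by
  rw [← Li2_add_Li2_one_sub hx, RL, RL, sub_sub_cancel]
  ring

lemma RL_one : RL 1 = π ^ 2 / 6 := by simp [RL, Li2_one]

theorem rogers_reflection :
    (∀ x : ℝ, 0 ≤ x → RL (x / (1 + x)) + RL (1 / (1 + x)) = RL 1) ∧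
    RL 1 = Real.pi ^ 2 / 6 := by
  refine ⟨fun x hx => ?_, RL_one⟩
  have hpos : 0 < 1 + x := by linarith
  have hmem : x / (1 + x) ∈ Icc 0 1 := ⟨by positivity, (div_le_one hpos).2 (by linarith)⟩
  have hcompl : 1 / (1 + x) = 1 - x / (1 + x) := by field_simp; ring
  rw [hcompl, RL_add_RL_one_sub hmem, RL_one]
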